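/- Stability of the rank invariant: let M, N : ℝ^d → Vec be persistence modules (functors from the poset ℝ^d to vector spaces over a fixed field). Suppose M and N are ε-interleaved, i.e., there exist natural transformations f : M ⇒ N(ε·𝟙) and g : N ⇒ M(ε·𝟙) whose composites equal the internal 2ε-shift morphisms of M and N. Defining rk(M)(a,b) = rank(M(a ≤ b)) for a ≤ b (and ∞ otherwise), one has for all a ≤ b in ℝ^d: rk(N)(a − ε·𝟙, b + ε·𝟙) ≤ rk(M)(a, b) and rk(M)(a − ε·𝟙, b + ε·𝟙) ≤ rk(N)(a, b). Consequently d_I(rk(M), rk(N)) ≤ d_I^Vec(M, N). -/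
import Mathlib


namespace Stmt5

/-- A persistence module over the poset `ℝ^d`, valued in vector spaces over `K`. -/
structure PersMod (K : Type) [Field K] (d : ℕ) where
  V : (Fin d → ℝ) → Type
  [addgrp : ∀ a, AddCommGroup (V a)]
  [mod : ∀ a, Module K (V a)]
  map : ∀ a b : Fin d → ℝ, a ≤ b → (V a →ₗ[K] V b)
  map_id : ∀ a (h : a ≤ a), map a a h = LinearMap.id
  map_comp : ∀ a b c (hab : a ≤ b) (hbc : b ≤ c),
    (map b c hbc).comp (map a b hab) = map a c (le_trans hab hbc)

attribute [instance] PersMod.addgrp PersMod.mod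

/-- Shift of a point of `ℝ^d` by `ε` in every coordinate. -/
def shift {d : ℕ} (a : Fin d → ℝ) (ε : ℝ) : Fin d → ℝ := fun i => a i + ε

/-- The rank of a structure map. -/
noncomputable def rk {K : Type} [Field K] {d : ℕ} (M : PersMod K d)
    (a b : Fin d → ℝ) (h : a ≤ b) : Cardinal :=
  Module.rank K (LinearMap.range (M.map a b h))

lemma rk_congr_left {K : Type} [Field K] {d : ℕ} (M : PersMod K d)
    {a a' b : Fin d → ℝ} (h : a = a') (hab : a ≤ b) (h' : a' ≤ b) :
    rk M a b hab = rk M a' b h' := by subst h; rfl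

lemma rk_aux {K : Type} [Field K] {d : ℕ}
    (M N : PersMod K d) (ε : ℝ) (hε : 0 ≤ ε)
    (f : ∀ a : Fin d → ℝ, M.V a →ₗ[K] N.V (shift a ε))
    (g : ∀ a : Fin d → ℝ, N.V a →ₗ[K] M.V (shift a ε))
    (hf_nat : ∀ a b (h : a ≤ b) (h' : shift a ε ≤ shift b ε),
      (N.map (shift a ε) (shift b ε) h').comp (f a) = (f b).comp (M.map a b h))
    (hfg : ∀ a (h : a ≤ shift (shift a ε) ε),
      (f (shift a ε)).comp (g a) = N.map a (shift (shift a ε) ε) h)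
    (a b : Fin d → ℝ) (hab : a ≤ b) (h' : shift a (-ε) ≤ shift b ε) :
    rk N (shift a (-ε)) (shift b ε) h' ≤ rk M a b hab := by
  set a' : Fin d → ℝ := shift a (-ε) with ha'
  set s : Fin d → ℝ := shift a' ε with hs
  have hsa : s = a := by funext i; simp [hs, ha', shift]
  have hsb : s ≤ b := hsa ▸ hab
  have hss : shift s ε ≤ shift b ε := fun i => by
    simpa [shift] using hsb i
  have ha's : a' ≤ shift s ε := fun i => by
    simp only [shift, ha', hs]; linarith [hε]
  -- the factorization
  have comp_eq :
      ((f b).comp ((M.map s b hsb).comp (g a'))) = N.map a' (shift b ε) h' := by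
    have h1 : (f b).comp ((M.map s b hsb).comp (g a'))
        = ((f b).comp (M.map s b hsb)).comp (g a') := by
      ext x; rfl
    rw [h1, ← hf_nat s b hsb hss]
    have h2 : ((N.map (shift s ε) (shift b ε) hss).comp (f s)).comp (g a')
        = (N.map (shift s ε) (shift b ε) hss).comp ((f s).comp (g a')) := by
      ext x; rfl
    rw [h2, hfg a' ha's, N.map_comp]
  have hrank : rk N a' (shift b ε) h' = LinearMap.rank (N.map a' (shift b ε) h') := rfl
  rw [hrank, ← comp_eq]
  calc LinearMap.rank ((f b).comp ((M.map s b hsb).comp (g a')))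
      ≤ LinearMap.rank ((M.map s b hsb).comp (g a')) :=
        LinearMap.rank_comp_le_right _ _
    _ ≤ LinearMap.rank (M.map s b hsb) := LinearMap.rank_comp_le_left _ _
    _ = rk M s b hsb := rfl
    _ = rk M a b hab := rk_congr_left M hsa hsb hab

/-- stability of the rank invariant: if `M` and `N` are `ε`-interleaved,
then for all `a ≤ b`, `rk(N)(a−ε𝟙, b+ε𝟙) ≤ rk(M)(a,b)` and
`rk(M)(a−ε𝟙, b+ε𝟙) ≤ rk(N)(a,b)`. -/
theorem rank_invariant_stability {K : Type} [Field K] {d : ℕ}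
    (M N : PersMod K d) (ε : ℝ) (hε : 0 ≤ ε)
    (f : ∀ a : Fin d → ℝ, M.V a →ₗ[K] N.V (shift a ε))
    (g : ∀ a : Fin d → ℝ, N.V a →ₗ[K] M.V (shift a ε))
    (hf_nat : ∀ a b (h : a ≤ b) (h' : shift a ε ≤ shift b ε),
      (N.map (shift a ε) (shift b ε) h').comp (f a) = (f b).comp (M.map a b h))
    (hg_nat : ∀ a b (h : a ≤ b) (h' : shift a ε ≤ shift b ε),
      (M.map (shift a ε) (shift b ε) h').comp (g a) = (g b).comp (N.map a b h))
    (hgf : ∀ a (h : a ≤ shift (shift a ε) ε),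
      (g (shift a ε)).comp (f a) = M.map a (shift (shift a ε) ε) h)
    (hfg : ∀ a (h : a ≤ shift (shift a ε) ε),
      (f (shift a ε)).comp (g a) = N.map a (shift (shift a ε) ε) h) :
    ∀ a b : Fin d → ℝ, ∀ (hab : a ≤ b) (h' : shift a (-ε) ≤ shift b ε),
      rk N (shift a (-ε)) (shift b ε) h' ≤ rk M a b hab ∧
      rk M (shift a (-ε)) (shift b ε) h' ≤ rk N a b hab := by
  intro a b hab h'
  exact ⟨rk_aux M N ε hε f g hf_nat hfg a b hab h',
         rk_aux N M ε hε g f hg_nat hgf a b hab h'⟩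

end Stmt5
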